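/- For every integer m ≥ 2, ∑_{n=1}^{m−1} 1/sin²(nπ/m) = (m²−1)/3. -/

import Mathlib

open Finset Complex Real

private lemma vl1 (z : ℂ) (M : ℕ) : (z-1)^2 * ∑ k ∈ range M, (k:ℂ) * z^k
    = ((M:ℂ)-1)*z^(M+1) - (M:ℂ)*z^M + z := by
  induction M with
  | zero => simp
  | succ M ih =>
    rw [Finset.sum_range_succ]
    push_cast
    ring_nf
    ring_nf at ih
    linear_combination ih

private lemma vl2 (z : ℂ) (M : ℕ) : (z-1)^3 * ∑ k ∈ range M, (k:ℂ)*((M:ℂ)-k)*z^k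
    = ((M:ℂ)-1)*z^(M+2) - ((M:ℂ)+1)*z^(M+1) + ((M:ℂ)+1)*z^2 - ((M:ℂ)-1)*z := by
  induction M with
  | zero => simp; ring
  | succ M ih =>
    have h1 := vl1 z (M+1)
    have e1 : ∑ k ∈ range (M+1), (k:ℂ)*(((M:ℕ)+1:ℂ)-k)*z^k
        = (∑ k ∈ range M, (k:ℂ)*((M:ℂ)-k)*z^k) + ∑ k ∈ range (M+1), (k:ℂ)*z^k := by
      have : ∀ k:ℕ, (k:ℂ)*(((M:ℕ)+1:ℂ)-k)*z^k = (k:ℂ)*((M:ℂ)-k)*z^k + (k:ℂ)*z^k := by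
        intro k; ring
      simp_rw [this, Finset.sum_add_distrib]
      rw [Finset.sum_range_succ (f := fun k => (k:ℂ)*((M:ℂ)-k)*z^k)]
      ring
    push_cast
    rw [e1]
    push_cast at h1 ih
    ring_nf
    ring_nf at ih h1
    linear_combination ih + (z-1)*h1

private lemma vsumk (M : ℕ) : ∑ k ∈ range M, (k:ℂ) = (M:ℂ)*((M:ℂ)-1)/2 := by
  induction M with
  | zero => simp
  | succ M ih => rw [Finset.sum_range_succ, ih]; push_cast; ring

private lemma vsumk2 (M : ℕ) : ∑ k ∈ range M, (k:ℂ)^2 = (M:ℂ)*((M:ℂ)-1)*(2*(M:ℂ)-1)/6 := by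
  induction M with
  | zero => simp
  | succ M ih => rw [Finset.sum_range_succ, ih]; push_cast; ring

private lemma vsumc (M : ℕ) : ∑ k ∈ range M, (k:ℂ)*((M:ℂ)-k) = (M:ℂ)*((M:ℂ)^2-1)/6 := by
  have : ∀ k:ℕ, (k:ℂ)*((M:ℂ)-k) = (M:ℂ)*(k:ℂ) - (k:ℂ)^2 := by intro k; ring
  simp_rw [this, Finset.sum_sub_distrib, ← Finset.mul_sum, vsumk, vsumk2]
  ring

private lemma vrou (m k : ℕ) (hm : 2 ≤ m) (hk1 : 1 ≤ k) (hk2 : k ≤ m - 1) :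
    ∑ n ∈ Finset.Icc 1 (m-1), (Complex.exp (2*Real.pi*Complex.I*n/m))^k = -1 := by
  have hm0 : (m:ℂ) ≠ 0 := by exact_mod_cast (by omega : m ≠ 0)
  set w : ℂ := Complex.exp (2*Real.pi*Complex.I*k/m) with hw
  have hpow : ∀ n : ℕ, (Complex.exp (2*Real.pi*Complex.I*n/m))^k = w^n := by
    intro n
    rw [hw, ← Complex.exp_nat_mul, ← Complex.exp_nat_mul]
    congr 1; ring
  have hwm : w^m = 1 := by
    rw [hw, ← Complex.exp_nat_mul]
    have : (m:ℂ) * (2*Real.pi*Complex.I*k/m) = k*(2*Real.pi*Complex.I) := by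
      field_simp
    rw [this]
    exact_mod_cast Complex.exp_nat_mul_two_pi_mul_I k
  have hw1 : w ≠ 1 := by
    rw [hw, Ne, Complex.exp_eq_one_iff]
    rintro ⟨n, hn⟩
    have hpi : (Real.pi : ℂ) ≠ 0 := by exact_mod_cast Real.pi_ne_zero
    have hI : Complex.I ≠ 0 := Complex.I_ne_zero
    have : (k:ℂ) = n*m := by
      field_simp at hn
      have h2 : (2:ℂ) ≠ 0 := two_ne_zero
      apply mul_left_cancel₀ (mul_ne_zero (mul_ne_zero h2 hpi) hI)
      linear_combination (2*(Real.pi:ℂ)*Complex.I) * hn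
    have : (k:ℤ) = n*m := by exact_mod_cast this
    have : (m:ℤ) ∣ (k:ℤ) := ⟨n, by linarith⟩
    have : m ∣ k := Int.ofNat_dvd.mp (by exact_mod_cast this)
    rcases this with ⟨c, rfl⟩
    rcases Nat.eq_zero_or_pos c with rfl | hc
    · omega
    · have : m ≤ m * c := Nat.le_mul_of_pos_right m hc
      omega
  simp_rw [hpow]
  have hicc : Finset.Icc 1 (m-1) = (Finset.range m).erase 0 := by
    ext n; simp [Finset.mem_Icc, Finset.mem_range, Finset.mem_erase]; omega
  have hgeom : ∑ n ∈ range m, w^n = 0 := by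
    rw [geom_sum_eq hw1, hwm]; simp
  rw [hicc]
  have := Finset.sum_erase_add (range m) (fun n => w^n) (by simp [Finset.mem_range]; omega : 0 ∈ range m)
  simp only [pow_zero] at this
  rw [hgeom] at this
  linear_combination this

private lemma vtrigA (θ : ℝ) :
    (Complex.exp (2*(θ:ℂ)*Complex.I) - 1)^2
      = -4 * Complex.exp (2*(θ:ℂ)*Complex.I) * ((Real.sin θ : ℂ))^2 := by
  have h1 : ((Real.sin θ : ℂ)) = Complex.sin θ := Complex.ofReal_sin θ
  rw [h1, Complex.sin]
  have e2 : Complex.exp (2*(θ:ℂ)*Complex.I) = Complex.exp ((θ:ℂ)*Complex.I) ^ 2 := by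
    rw [← Complex.exp_nat_mul]; congr 1; push_cast; ring
  have en : Complex.exp (-(θ:ℂ)*Complex.I) = (Complex.exp ((θ:ℂ)*Complex.I))⁻¹ := by
    rw [← Complex.exp_neg]; congr 1; ring
  rw [e2, en]
  have he : Complex.exp ((θ:ℂ)*Complex.I) ≠ 0 := Complex.exp_ne_zero _
  field_simp
  linear_combination (4 - 8*(Complex.exp ((θ:ℂ)*Complex.I))^2 + 4*(Complex.exp ((θ:ℂ)*Complex.I))^4) * Complex.I_sq

private noncomputable def vz (m n : ℕ) : ℂ := Complex.exp (2*Real.pi*Complex.I*n/m)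
private noncomputable def vP (m : ℕ) (x : ℂ) : ℂ := ∑ k ∈ Finset.range m, (k:ℂ)*((m:ℂ)-k)*x^k

set_option maxHeartbeats 1000000 in
/-- The trigonometric identity underlying the genus-2 Verlinde formula: for every integer
`m ≥ 2`, `∑_{n=1}^{m−1} 1/sin²(nπ/m) = (m² − 1)/3`. -/
theorem stmt19 (m : ℕ) (hm : 2 ≤ m) :
    ∑ n ∈ Finset.Icc 1 (m - 1), 1 / (Real.sin (n * Real.pi / m)) ^ 2
      = ((m : ℝ) ^ 2 - 1) / 3 := by
  have hm0R : (m:ℝ) ≠ 0 := by exact_mod_cast (by omega : m ≠ 0)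
  have hm0 : (m:ℂ) ≠ 0 := by exact_mod_cast (by omega : m ≠ 0)
  -- per-term identity
  have hterm : ∀ n ∈ Finset.Icc 1 (m-1),
      ((1 / (Real.sin (n * Real.pi / m)) ^ 2 : ℝ) : ℂ) = (-2/(m:ℂ)) * vP m (vz m n) := by
    intro n hn
    rw [Finset.mem_Icc] at hn
    set θ : ℝ := n * Real.pi / m with hθ
    have hsinpos : 0 < Real.sin θ := by
      apply Real.sin_pos_of_pos_of_lt_pi
      · apply div_pos
        · exact mul_pos (by exact_mod_cast (by omega : 0 < n)) Real.pi_pos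
        · exact_mod_cast (by omega : 0 < m)
      · rw [div_lt_iff₀ (by exact_mod_cast (by omega : 0 < m))]
        have : (n:ℝ) < m := by exact_mod_cast (by omega : n < m)
        nlinarith [Real.pi_pos]
    have hs : (Real.sin θ : ℂ) ≠ 0 := by exact_mod_cast hsinpos.ne'
    have hz2θ : vz m n = Complex.exp (2*(θ:ℂ)*Complex.I) := by
      rw [vz]; congr 1; rw [hθ]; push_cast; ring
    have hA : (vz m n - 1)^2 = -4 * vz m n * ((Real.sin θ : ℂ))^2 := by
      rw [hz2θ]; exact vtrigA θ
    have hzne : vz m n ≠ 0 := by rw [vz]; exact Complex.exp_ne_zero _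
    have hz1 : vz m n ≠ 1 := by
      intro h
      rw [h] at hA
      have h0 : ((Real.sin θ : ℂ))^2 = 0 := by linear_combination ((1:ℂ)/4) * hA
      exact hs (pow_eq_zero_iff two_ne_zero |>.mp h0)
    have hzm : (vz m n)^m = 1 := by
      rw [vz, ← Complex.exp_nat_mul]
      have : (m:ℂ) * (2*Real.pi*Complex.I*n/m) = n*(2*Real.pi*Complex.I) := by
        field_simp
      rw [this]
      exact_mod_cast Complex.exp_nat_mul_two_pi_mul_I n
    -- key evaluation
    have hkey : (vz m n - 1)^2 * vP m (vz m n) = 2*(m:ℂ)*(vz m n) := by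
      have h2 := vl2 (vz m n) m
      have hp2 : (vz m n)^(m+2) = (vz m n)^2 := by rw [pow_add, hzm, one_mul]
      have hp1 : (vz m n)^(m+1) = vz m n := by rw [pow_add, hzm, one_mul, pow_one]
      rw [hp2, hp1] at h2
      have hfac : (vz m n - 1) * ((vz m n - 1)^2 * vP m (vz m n) - 2*(m:ℂ)*(vz m n)) = 0 := by
        rw [vP]
        linear_combination h2
      rcases mul_eq_zero.mp hfac with h | h
      · exact absurd (by linear_combination h : vz m n = 1) hz1
      · linear_combination h
    -- combine: -4 z s² P = 2 m z  ⇒  1/s² = -2/m · P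
    rw [hA] at hkey
    have hsP : ((Real.sin θ : ℂ))^2 * vP m (vz m n) = -(m:ℂ)/2 := by
      have h4 : (-4 : ℂ) * vz m n ≠ 0 := by
        apply mul_ne_zero _ hzne; norm_num
      apply mul_left_cancel₀ h4
      linear_combination hkey
    have hcast : ((1 / (Real.sin θ) ^ 2 : ℝ) : ℂ) = 1 / ((Real.sin θ : ℂ))^2 := by
      push_cast; ring
    rw [hcast]
    generalize hgen : ((Real.sin θ : ℝ) : ℂ) = s at hsP hs
    field_simp
    linear_combination (2 : ℂ) * hsP
  -- sum it up
  have hC : ((∑ n ∈ Finset.Icc 1 (m - 1), 1 / (Real.sin (n * Real.pi / m)) ^ 2 : ℝ) : ℂ)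
      = ((m:ℂ)^2 - 1)/3 := by
    rw [Complex.ofReal_sum]
    rw [Finset.sum_congr rfl hterm]
    rw [← Finset.mul_sum]
    have hswap : ∑ n ∈ Finset.Icc 1 (m-1), vP m (vz m n)
        = ∑ k ∈ range m, ∑ n ∈ Finset.Icc 1 (m-1), (k:ℂ)*((m:ℂ)-k)*(vz m n)^k := by
      simp only [vP]
      exact Finset.sum_comm
    have hinner : ∀ k ∈ range m,
        ∑ n ∈ Finset.Icc 1 (m-1), (k:ℂ)*((m:ℂ)-k)*(vz m n)^k = -((k:ℂ)*((m:ℂ)-k)) := by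
      intro k hk
      rw [Finset.mem_range] at hk
      rcases Nat.eq_zero_or_pos k with rfl | hkpos
      · simp
      · rw [← Finset.mul_sum]
        simp only [vz]
        rw [vrou m k hm hkpos (by omega)]
        ring
    rw [hswap, Finset.sum_congr rfl hinner]
    have : ∑ k ∈ range m, -((k:ℂ)*((m:ℂ)-k)) = -((m:ℂ)*((m:ℂ)^2-1)/6) := by
      rw [Finset.sum_neg_distrib, vsumc]
    rw [this]
    field_simp
    ring
  exact_mod_cast hC
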